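/- arXiv:2309.11370 — 3 statements merged into one kernel-verified Lean document; each statement's English description precedes it below -/
import Mathlib

section
/- Let n ≥ 1 and let γ : Fin n → Fin n → Fin n → ℝ satisfy γ I J K = −γ J I K for all I, J, K. Then Σ_J (Σ_K γ J K K)^2 ≤ ((n−1)/2) · Σ_{I,J,K} (γ I J K)^2. -/
theorem stmt_12 (n : ℕ) (hn : 1 ≤ n) (γ : Fin n → Fin n → Fin n → ℝ)
    (hanti : ∀ I J K, γ I J K = -γ J I K) :
    ∑ J : Fin n, (∑ K : Fin n, γ J K K) ^ 2 ≤
      ((n : ℝ) - 1) / 2 * ∑ I : Fin n, ∑ J : Fin n, ∑ K : Fin n, (γ I J K) ^ 2 := by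
  have hzero : ∀ I K, γ I I K = 0 := by
    intro I K; have := hanti I I K; linarith
  set S : ℝ := ∑ I : Fin n, ∑ J : Fin n, (γ I J J) ^ 2 with hS
  have hSnn : 0 ≤ S := Finset.sum_nonneg fun _ _ =>
    Finset.sum_nonneg fun _ _ => sq_nonneg _
  have hn1 : (0:ℝ) ≤ (n:ℝ) - 1 := by
    have : (1:ℝ) ≤ (n:ℝ) := by exact_mod_cast hn
    linarith
  -- Step 1: Cauchy-Schwarz for each J
  have step1 : ∀ J : Fin n, (∑ K : Fin n, γ J K K) ^ 2 ≤
      ((n:ℝ) - 1) * ∑ K : Fin n, (γ J K K) ^ 2 := by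
    intro J
    have hsum : ∑ K : Fin n, γ J K K = ∑ K ∈ Finset.univ.erase J, γ J K K := by
      exact (Finset.sum_erase (f := fun K => γ J K K) Finset.univ (hzero J J)).symm
    rw [hsum]
    have h1 := sq_sum_le_card_mul_sum_sq (s := Finset.univ.erase J)
      (f := fun K => γ J K K)
    have hcard : ((Finset.univ.erase J).card : ℝ) = (n:ℝ) - 1 := by
      rw [Finset.card_erase_of_mem (Finset.mem_univ J)]
      simp [Nat.cast_sub hn]
    have h2 : ∑ K ∈ Finset.univ.erase J, (γ J K K) ^ 2 ≤
        ∑ K : Fin n, (γ J K K) ^ 2 :=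
      Finset.sum_le_sum_of_subset_of_nonneg (Finset.subset_univ _)
        (fun _ _ _ => sq_nonneg _)
    calc (∑ K ∈ Finset.univ.erase J, γ J K K) ^ 2
        ≤ ((Finset.univ.erase J).card : ℝ) * ∑ K ∈ Finset.univ.erase J, (γ J K K) ^ 2 := h1
      _ = ((n:ℝ) - 1) * ∑ K ∈ Finset.univ.erase J, (γ J K K) ^ 2 := by rw [hcard]
      _ ≤ ((n:ℝ) - 1) * ∑ K : Fin n, (γ J K K) ^ 2 := by
          exact mul_le_mul_of_nonneg_left h2 hn1
  -- Step 2: 2 * S ≤ triple sum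
  have pairle : ∀ I J : Fin n, (γ I J J) ^ 2 + (γ I J I) ^ 2 ≤
      ∑ K : Fin n, (γ I J K) ^ 2 := by
    intro I J
    by_cases h : I = J
    · subst h
      simp [hzero]
    · have hpair : ∑ K ∈ ({J, I} : Finset (Fin n)), (γ I J K) ^ 2
          = (γ I J J) ^ 2 + (γ I J I) ^ 2 :=
        Finset.sum_pair (fun hJI => h hJI.symm)
      rw [← hpair]
      exact Finset.sum_le_sum_of_subset_of_nonneg (Finset.subset_univ _)
        (fun _ _ _ => sq_nonneg _)
  have step2 : 2 * S ≤ ∑ I : Fin n, ∑ J : Fin n, ∑ K : Fin n, (γ I J K) ^ 2 := by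
    have hswap : ∑ I : Fin n, ∑ J : Fin n, (γ I J I) ^ 2 = S := by
      rw [hS, Finset.sum_comm]
      apply Finset.sum_congr rfl; intro J _
      apply Finset.sum_congr rfl; intro I _
      have := hanti I J I
      rw [show γ I J I = -γ J I I from hanti I J I]
      ring
    calc 2 * S = S + ∑ I : Fin n, ∑ J : Fin n, (γ I J I) ^ 2 := by rw [hswap]; ring
      _ = ∑ I : Fin n, ∑ J : Fin n, ((γ I J J) ^ 2 + (γ I J I) ^ 2) := by
          rw [hS]; rw [← Finset.sum_add_distrib]
          apply Finset.sum_congr rfl; intro I _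
          rw [← Finset.sum_add_distrib]
      _ ≤ ∑ I : Fin n, ∑ J : Fin n, ∑ K : Fin n, (γ I J K) ^ 2 :=
          Finset.sum_le_sum fun I _ => Finset.sum_le_sum fun J _ => pairle I J
  calc ∑ J : Fin n, (∑ K : Fin n, γ J K K) ^ 2
      ≤ ∑ J : Fin n, ((n:ℝ) - 1) * ∑ K : Fin n, (γ J K K) ^ 2 :=
        Finset.sum_le_sum fun J _ => step1 J
    _ = ((n:ℝ) - 1) * S := by rw [hS, Finset.mul_sum]
    _ = ((n:ℝ) - 1) / 2 * (2 * S) := by ring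
    _ ≤ ((n:ℝ) - 1) / 2 * ∑ I : Fin n, ∑ J : Fin n, ∑ K : Fin n, (γ I J K) ^ 2 :=
        mul_le_mul_of_nonneg_left step2 (by linarith)
end

section
/- Let A be a commutative ℝ-algebra of real-valued functions on a set S (with pointwise operations), let E_1, …, E_n : A → A be derivations, and for a multi-index 𝐈 = (i_1, …, i_ℓ) write E_𝐈 = E_{i_1} ∘ ⋯ ∘ E_{i_ℓ}. Then for all φ, ψ ∈ A, every ℓ, m ∈ ℕ with m ≥ 1, and every x ∈ S: Σ_{|𝐈| = ℓ} |E_𝐈(φψ)(x)|^m ≤ 2^{mℓ} · (Σ_{|𝐉| ≤ ℓ} |E_𝐉(φ)(x)|^m) · (Σ_{|𝐉| ≤ ℓ} |E_𝐉(ψ)(x)|^m). -/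
/-- Iterated application of the derivations `E i` along a list of indices:
`iterDeriv A E [i₁, …, i_ℓ] φ = E i₁ (E i₂ (⋯ (E i_ℓ φ)))`. -/
def iterDeriv {S : Type*} {n : ℕ} (A : Subalgebra ℝ (S → ℝ))
    (E : Fin n → Derivation ℝ A A) : List (Fin n) → A → A
  | [], φ => φ
  | i :: rest, φ => E i (iterDeriv A E rest φ)

namespace Stmt14Aux

/-- Select the entries of `L` at positions where the mask `p` equals `v`. -/
def selB {ι : Type*} (v : Bool) : List ι → List Bool → List ι
  | i :: L, b :: p => if b = v then i :: selB v L p else selB v L p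
  | _, _ => []

@[simp] lemma selB_nil {ι : Type*} (v : Bool) (p : List Bool) :
    selB v ([] : List ι) p = [] := by cases p <;> rfl

@[simp] lemma selB_nil' {ι : Type*} (v : Bool) (L : List ι) :
    selB v L [] = [] := by cases L <;> rfl

@[simp] lemma selB_cons_tt {ι : Type*} (i : ι) (L : List ι) (p : List Bool) :
    selB true (i :: L) (true :: p) = i :: selB true L p := by simp [selB]

@[simp] lemma selB_cons_tf {ι : Type*} (i : ι) (L : List ι) (p : List Bool) :
    selB true (i :: L) (false :: p) = selB true L p := by simp [selB]

@[simp] lemma selB_cons_ft {ι : Type*} (i : ι) (L : List ι) (p : List Bool) :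
    selB false (i :: L) (true :: p) = selB false L p := by simp [selB]

@[simp] lemma selB_cons_ff {ι : Type*} (i : ι) (L : List ι) (p : List Bool) :
    selB false (i :: L) (false :: p) = i :: selB false L p := by simp [selB]

lemma sum_pi_succ {k : ℕ} {X M : Type*} [Fintype X] [AddCommMonoid M]
    (F : (Fin (k + 1) → X) → M) :
    ∑ f : Fin (k + 1) → X, F f = ∑ x : X, ∑ g : Fin k → X, F (Fin.cons x g) := by
  have h := Fintype.sum_equiv (Fin.consEquiv fun _ : Fin (k + 1) => X)
    (fun p : X × (Fin k → X) => F (Fin.cons p.1 p.2)) F (fun p => rfl)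
  rw [← h, Fintype.sum_prod_type]

lemma sum_fin_arrow_cast {c k : ℕ} (h : c = k) {X M : Type*} [Fintype X] [AddCommMonoid M]
    (F : List X → M) :
    ∑ f : Fin c → X, F (List.ofFn f) = ∑ f : Fin k → X, F (List.ofFn f) := by
  subst h; rfl

variable {S : Type*} {n : ℕ}

@[simp] lemma iterDeriv_nil (A : Subalgebra ℝ (S → ℝ)) (E : Fin n → Derivation ℝ A A) (φ : A) :
    iterDeriv A E [] φ = φ := rfl

@[simp] lemma iterDeriv_cons (A : Subalgebra ℝ (S → ℝ)) (E : Fin n → Derivation ℝ A A)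
    (i : Fin n) (L : List (Fin n)) (φ : A) :
    iterDeriv A E (i :: L) φ = E i (iterDeriv A E L φ) := rfl

lemma iterDeriv_mul (A : Subalgebra ℝ (S → ℝ)) (E : Fin n → Derivation ℝ A A) (φ ψ : A) :
    ∀ L : List (Fin n), iterDeriv A E L (φ * ψ) =
      ∑ q : Fin L.length → Bool,
        iterDeriv A E (selB true L (List.ofFn q)) φ *
          iterDeriv A E (selB false L (List.ofFn q)) ψ
  | [] => by simp
  | i :: L => by
    have IH := iterDeriv_mul A E φ ψ L
    rw [iterDeriv_cons, IH, map_sum]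
    simp only [List.length_cons]
    rw [sum_pi_succ (k := L.length) (X := Bool)]
    rw [Fintype.sum_bool]
    simp only [List.ofFn_succ, Fin.cons_zero, Fin.cons_succ, selB_cons_tt, selB_cons_tf,
      selB_cons_ft, selB_cons_ff, iterDeriv_cons]
    rw [← Finset.sum_add_distrib]
    refine Finset.sum_congr rfl fun q _ => ?_
    rw [Derivation.leibniz, smul_eq_mul, smul_eq_mul]
    ring

lemma iterDeriv_mul' (A : Subalgebra ℝ (S → ℝ)) (E : Fin n → Derivation ℝ A A) (φ ψ : A)
    (ℓ : ℕ) (L : List (Fin n)) (hL : L.length = ℓ) :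
    iterDeriv A E L (φ * ψ) =
      ∑ q : Fin ℓ → Bool,
        iterDeriv A E (selB true L (List.ofFn q)) φ *
          iterDeriv A E (selB false L (List.ofFn q)) ψ := by
  subst hL; exact iterDeriv_mul A E φ ψ L

lemma sum_selB :
    ∀ (p : List Bool) (g h : List (Fin n) → ℝ),
    ∑ I : Fin p.length → Fin n,
        g (selB true (List.ofFn I) p) * h (selB false (List.ofFn I) p)
      = (∑ J : Fin (p.count true) → Fin n, g (List.ofFn J)) *
        (∑ K : Fin (p.count false) → Fin n, h (List.ofFn K))
  | [], g, h => by
    show ∑ I : Fin 0 → Fin n, _ = (∑ J : Fin 0 → Fin n, _) * (∑ K : Fin 0 → Fin n, _)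
    simp
  | b :: p, g, h => by
    simp only [List.length_cons]
    rw [sum_pi_succ (k := p.length) (X := Fin n)]
    cases b
    · simp only [List.ofFn_succ, Fin.cons_zero, Fin.cons_succ, selB_cons_tf, selB_cons_ff]
      calc ∑ i : Fin n, ∑ I : Fin p.length → Fin n,
            g (selB true (List.ofFn I) p) * h (i :: selB false (List.ofFn I) p)
          = ∑ i : Fin n, (∑ J : Fin (p.count true) → Fin n, g (List.ofFn J)) *
              (∑ K : Fin (p.count false) → Fin n, h (i :: List.ofFn K)) :=
            Finset.sum_congr rfl fun i _ => sum_selB p g (fun L => h (i :: L))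
        _ = (∑ J : Fin (p.count true) → Fin n, g (List.ofFn J)) *
              (∑ i : Fin n, ∑ K : Fin (p.count false) → Fin n, h (i :: List.ofFn K)) := by
            rw [← Finset.mul_sum]
        _ = (∑ J : Fin ((false :: p).count true) → Fin n, g (List.ofFn J)) *
              (∑ K : Fin ((false :: p).count false) → Fin n, h (List.ofFn K)) := by
            rw [sum_fin_arrow_cast (show (false :: p).count true = p.count true by
                simp [List.count_cons]) g,
              sum_fin_arrow_cast (show (false :: p).count false = p.count false + 1 by
                simp [List.count_cons]) h,
              sum_pi_succ (k := p.count false) (X := Fin n)]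
            simp only [List.ofFn_succ, Fin.cons_zero, Fin.cons_succ]
    · simp only [List.ofFn_succ, Fin.cons_zero, Fin.cons_succ, selB_cons_tt, selB_cons_ft]
      calc ∑ i : Fin n, ∑ I : Fin p.length → Fin n,
            g (i :: selB true (List.ofFn I) p) * h (selB false (List.ofFn I) p)
          = ∑ i : Fin n, (∑ J : Fin (p.count true) → Fin n, g (i :: List.ofFn J)) *
              (∑ K : Fin (p.count false) → Fin n, h (List.ofFn K)) :=
            Finset.sum_congr rfl fun i _ => sum_selB p (fun L => g (i :: L)) h
        _ = (∑ i : Fin n, ∑ J : Fin (p.count true) → Fin n, g (i :: List.ofFn J)) *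
              (∑ K : Fin (p.count false) → Fin n, h (List.ofFn K)) := by
            rw [← Finset.sum_mul]
        _ = (∑ J : Fin ((true :: p).count true) → Fin n, g (List.ofFn J)) *
              (∑ K : Fin ((true :: p).count false) → Fin n, h (List.ofFn K)) := by
            rw [sum_fin_arrow_cast (show (true :: p).count true = p.count true + 1 by
                simp [List.count_cons]) g,
              sum_fin_arrow_cast (show (true :: p).count false = p.count false by
                simp [List.count_cons]) h,
              sum_pi_succ (k := p.count true) (X := Fin n)]
            simp only [List.ofFn_succ, Fin.cons_zero, Fin.cons_succ]

lemma sum_selB' (ℓ : ℕ) (p : List Bool) (hp : p.length = ℓ) (g h : List (Fin n) → ℝ) :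
    ∑ I : Fin ℓ → Fin n,
        g (selB true (List.ofFn I) p) * h (selB false (List.ofFn I) p)
      = (∑ J : Fin (p.count true) → Fin n, g (List.ofFn J)) *
        (∑ K : Fin (p.count false) → Fin n, h (List.ofFn K)) := by
  subst hp; exact sum_selB p g h

end Stmt14Aux

open Stmt14Aux in
theorem stmt_14 {S : Type*} {n : ℕ} (A : Subalgebra ℝ (S → ℝ))
    (E : Fin n → Derivation ℝ A A) (φ ψ : A) (ℓ m : ℕ) (hm : 1 ≤ m) (x : S) :
    ∑ I : Fin ℓ → Fin n, |(iterDeriv A E (List.ofFn I) (φ * ψ) : S → ℝ) x| ^ m ≤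
      (2 : ℝ) ^ (m * ℓ) *
        (∑ j ∈ Finset.range (ℓ + 1), ∑ J : Fin j → Fin n,
          |(iterDeriv A E (List.ofFn J) φ : S → ℝ) x| ^ m) *
        (∑ j ∈ Finset.range (ℓ + 1), ∑ J : Fin j → Fin n,
          |(iterDeriv A E (List.ofFn J) ψ : S → ℝ) x| ^ m) := by
  classical
  obtain ⟨m, rfl⟩ : ∃ m', m = m' + 1 := ⟨m - 1, by omega⟩
  set ev : A →ₐ[ℝ] ℝ := (Pi.evalAlgHom ℝ (fun _ : S => ℝ) x).comp A.val with hev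
  have hevdef : ∀ a : A, (a : S → ℝ) x = ev a := fun a => rfl
  set Pφ := ∑ j ∈ Finset.range (ℓ + 1), ∑ J : Fin j → Fin n,
      |(iterDeriv A E (List.ofFn J) φ : S → ℝ) x| ^ (m + 1) with hPφ
  set Pψ := ∑ j ∈ Finset.range (ℓ + 1), ∑ J : Fin j → Fin n,
      |(iterDeriv A E (List.ofFn J) ψ : S → ℝ) x| ^ (m + 1) with hPψ
  have card2 : ((Finset.univ : Finset (Fin ℓ → Bool)).card : ℝ) = 2 ^ ℓ := by
    simp [Finset.card_univ, Fintype.card_fun]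
  -- pointwise bound for each I
  have key1 : ∀ I : Fin ℓ → Fin n,
      |(iterDeriv A E (List.ofFn I) (φ * ψ) : S → ℝ) x| ^ (m + 1) ≤
        (2 : ℝ) ^ (m * ℓ) * ∑ q : Fin ℓ → Bool,
          |ev (iterDeriv A E (selB true (List.ofFn I) (List.ofFn q)) φ)| ^ (m + 1) *
          |ev (iterDeriv A E (selB false (List.ofFn I) (List.ofFn q)) ψ)| ^ (m + 1) := by
    intro I
    rw [hevdef, iterDeriv_mul' A E φ ψ ℓ (List.ofFn I) (List.length_ofFn (f := I)), map_sum]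
    calc |∑ q : Fin ℓ → Bool,
            ev (iterDeriv A E (selB true (List.ofFn I) (List.ofFn q)) φ *
              iterDeriv A E (selB false (List.ofFn I) (List.ofFn q)) ψ)| ^ (m + 1)
        ≤ (∑ q : Fin ℓ → Bool,
            |ev (iterDeriv A E (selB true (List.ofFn I) (List.ofFn q)) φ)| *
            |ev (iterDeriv A E (selB false (List.ofFn I) (List.ofFn q)) ψ)|) ^ (m + 1) := by
          apply pow_le_pow_left₀ (abs_nonneg _)
          refine (Finset.abs_sum_le_sum_abs _ _).trans_eq ?_
          exact Finset.sum_congr rfl fun q _ => by rw [map_mul, abs_mul]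
      _ ≤ ((Finset.univ : Finset (Fin ℓ → Bool)).card : ℝ) ^ m *
            ∑ q : Fin ℓ → Bool,
              (|ev (iterDeriv A E (selB true (List.ofFn I) (List.ofFn q)) φ)| *
               |ev (iterDeriv A E (selB false (List.ofFn I) (List.ofFn q)) ψ)|) ^ (m + 1) :=
          pow_sum_le_card_mul_sum_pow
            (fun q _ => mul_nonneg (abs_nonneg _) (abs_nonneg _)) m
      _ = (2 : ℝ) ^ (m * ℓ) * ∑ q : Fin ℓ → Bool,
            |ev (iterDeriv A E (selB true (List.ofFn I) (List.ofFn q)) φ)| ^ (m + 1) *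
            |ev (iterDeriv A E (selB false (List.ofFn I) (List.ofFn q)) ψ)| ^ (m + 1) := by
          rw [card2, ← pow_mul, Nat.mul_comm ℓ m]
          congr 1
          exact Finset.sum_congr rfl fun q _ => mul_pow _ _ _
  -- sum over I for a fixed mask q
  have key2 : ∀ q : Fin ℓ → Bool,
      ∑ I : Fin ℓ → Fin n,
        |ev (iterDeriv A E (selB true (List.ofFn I) (List.ofFn q)) φ)| ^ (m + 1) *
        |ev (iterDeriv A E (selB false (List.ofFn I) (List.ofFn q)) ψ)| ^ (m + 1) ≤ Pφ * Pψ := by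
    intro q
    rw [sum_selB' ℓ (List.ofFn q) (List.length_ofFn (f := q))
      (fun L => |ev (iterDeriv A E L φ)| ^ (m + 1))
      (fun L => |ev (iterDeriv A E L ψ)| ^ (m + 1))]
    have hct : (List.ofFn q).count true ≤ ℓ :=
      List.count_le_length.trans_eq (List.length_ofFn (f := q))
    have hcf : (List.ofFn q).count false ≤ ℓ :=
      List.count_le_length.trans_eq (List.length_ofFn (f := q))
    have h1 : ∑ J : Fin ((List.ofFn q).count true) → Fin n,
        |ev (iterDeriv A E (List.ofFn J) φ)| ^ (m + 1) ≤ Pφ := by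
      rw [hPφ]
      exact Finset.single_le_sum (f := fun j => ∑ J : Fin j → Fin n,
        |(iterDeriv A E (List.ofFn J) φ : S → ℝ) x| ^ (m + 1))
        (fun j _ => by positivity) (Finset.mem_range.2 (by omega))
    have h2 : ∑ K : Fin ((List.ofFn q).count false) → Fin n,
        |ev (iterDeriv A E (List.ofFn K) ψ)| ^ (m + 1) ≤ Pψ := by
      rw [hPψ]
      exact Finset.single_le_sum (f := fun j => ∑ J : Fin j → Fin n,
        |(iterDeriv A E (List.ofFn J) ψ : S → ℝ) x| ^ (m + 1))
        (fun j _ => by positivity) (Finset.mem_range.2 (by omega))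
    exact mul_le_mul h1 h2 (Finset.sum_nonneg fun K _ => by positivity)
      ((Finset.sum_nonneg fun J _ => by positivity).trans h1)
  calc ∑ I : Fin ℓ → Fin n, |(iterDeriv A E (List.ofFn I) (φ * ψ) : S → ℝ) x| ^ (m + 1)
      ≤ ∑ I : Fin ℓ → Fin n, (2 : ℝ) ^ (m * ℓ) * ∑ q : Fin ℓ → Bool,
          |ev (iterDeriv A E (selB true (List.ofFn I) (List.ofFn q)) φ)| ^ (m + 1) *
          |ev (iterDeriv A E (selB false (List.ofFn I) (List.ofFn q)) ψ)| ^ (m + 1) :=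
        Finset.sum_le_sum fun I _ => key1 I
    _ = (2 : ℝ) ^ (m * ℓ) * ∑ q : Fin ℓ → Bool, ∑ I : Fin ℓ → Fin n,
          |ev (iterDeriv A E (selB true (List.ofFn I) (List.ofFn q)) φ)| ^ (m + 1) *
          |ev (iterDeriv A E (selB false (List.ofFn I) (List.ofFn q)) ψ)| ^ (m + 1) := by
        rw [← Finset.mul_sum, Finset.sum_comm]
    _ ≤ (2 : ℝ) ^ (m * ℓ) * ∑ _q : Fin ℓ → Bool, Pφ * Pψ := by
        gcongr with q hq
        exact key2 q
    _ = (2 : ℝ) ^ ((m + 1) * ℓ) * Pφ * Pψ := by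
        rw [Finset.sum_const, nsmul_eq_mul]
        simp only [Finset.card_univ, Fintype.card_fun, Fintype.card_bool, Fintype.card_fin]
        push_cast
        rw [show (m + 1) * ℓ = m * ℓ + ℓ by ring, pow_add]
        ring
end

section
/- Let A be a commutative ℝ-algebra of real-valued functions on a set S (with pointwise operations), let E_1, …, E_n : A → A be derivations, and for a multi-index 𝐈 write E_𝐈 for the corresponding iterated composition. Then for all φ, ψ ∈ A, every ℓ ≥ 1, m ≥ 1, and every x ∈ S: Σ_{|𝐈| = ℓ} |([E_𝐈, φ]ψ)(x)|^m ≤ 2^{mℓ} · (Σ_{|𝐉| ≤ ℓ} |E_𝐉(φ)(x)|^m) · (Σ_{|𝐉| ≤ ℓ−1} |E_𝐉(ψ)(x)|^m), where [E_𝐈, φ]ψ := E_𝐈(φψ) − φ·E_𝐈(ψ). -/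
set_option maxHeartbeats 1000000
set_option synthInstance.maxHeartbeats 400000

namespace Stmt15Aux

variable {S : Type*} {n : ℕ}

/-- All ways to split a list of indices into two complementary sublists. -/
def splits : List (Fin n) → List (List (Fin n) × List (Fin n))
  | [] => [([], [])]
  | i :: L => ((splits L).map fun p => (i :: p.1, p.2)) ++
      ((splits L).map fun p => (p.1, i :: p.2))

/-- Splits whose first component is nonempty. -/
def splits1 : List (Fin n) → List (List (Fin n) × List (Fin n))
  | [] => []
  | i :: L => ((splits L).map fun p => (i :: p.1, p.2)) ++
      ((splits1 L).map fun p => (p.1, i :: p.2))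

lemma splits_length : ∀ L : List (Fin n), (splits L).length = 2 ^ L.length
  | [] => rfl
  | i :: L => by
    simp [splits, splits_length L, pow_succ]; ring

lemma splits1_length_le : ∀ L : List (Fin n), (splits1 L).length ≤ 2 ^ L.length
  | [] => by simp [splits1]
  | i :: L => by
    simp only [splits1, List.length_append, List.length_map, splits_length,
      List.length_cons, pow_succ]
    have := splits1_length_le L
    omega

lemma splits_sum {M : Type*} [AddCommMonoid M] :
    ∀ (L : List (Fin n)) (h : List (Fin n) × List (Fin n) → M),
      ((splits L).map h).sum = h ([], L) + ((splits1 L).map h).sum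
  | [], h => by simp [splits, splits1]
  | i :: L, h => by
    simp only [splits, splits1, List.map_append, List.sum_append, List.map_map]
    rw [splits_sum L (h ∘ fun p => (p.1, i :: p.2))]
    simp only [Function.comp]
    abel

variable (A : Subalgebra ℝ (S → ℝ)) (E : Fin n → Derivation ℝ A A)

lemma list_sum_map_add {α M : Type*} [AddCommMonoid M] (l : List α) (f g : α → M) :
    (l.map fun a => f a + g a).sum = (l.map f).sum + (l.map g).sum := by
  induction l with
  | nil => simp
  | cons a l ih => simp [ih]; abel

lemma leibniz (φ ψ : A) :
    ∀ L : List (Fin n), iterDeriv A E L (φ * ψ) =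
      ((splits L).map fun p => iterDeriv A E p.1 φ * iterDeriv A E p.2 ψ).sum
  | [] => by simp [iterDeriv, splits]
  | i :: L => by
    show E i (iterDeriv A E L (φ * ψ)) = _
    rw [leibniz φ ψ L, map_list_sum (E i), List.map_map]
    have key : ∀ p : List (Fin n) × List (Fin n),
        (⇑(E i) ∘ fun p : List (Fin n) × List (Fin n) =>
          iterDeriv A E p.1 φ * iterDeriv A E p.2 ψ) p =
        iterDeriv A E (i :: p.1) φ * iterDeriv A E p.2 ψ +
          iterDeriv A E p.1 φ * iterDeriv A E (i :: p.2) ψ := by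
      intro p
      show E i (iterDeriv A E p.1 φ * iterDeriv A E p.2 ψ) =
        E i (iterDeriv A E p.1 φ) * iterDeriv A E p.2 ψ +
          iterDeriv A E p.1 φ * E i (iterDeriv A E p.2 ψ)
      rw [Derivation.leibniz, smul_eq_mul, smul_eq_mul]
      ring
    rw [List.map_congr_left (fun p _ => key p), list_sum_map_add]
    simp only [splits, List.map_append, List.sum_append, List.map_map]
    congr 1

lemma comm_eq (φ ψ : A) (L : List (Fin n)) :
    iterDeriv A E L (φ * ψ) - φ * iterDeriv A E L ψ =
      ((splits1 L).map fun p => iterDeriv A E p.1 φ * iterDeriv A E p.2 ψ).sum := by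
  rw [leibniz A E φ ψ L,
    splits_sum L (fun p => iterDeriv A E p.1 φ * iterDeriv A E p.2 ψ)]
  simp [iterDeriv]

lemma sum_pi_succ {M : Type*} [AddCommMonoid M] (ℓ : ℕ)
    (f : (Fin (ℓ + 1) → Fin n) → M) :
    ∑ I : Fin (ℓ + 1) → Fin n, f I =
      ∑ i : Fin n, ∑ I : Fin ℓ → Fin n, f (Fin.cons i I) := by
  rw [← (Fin.consEquiv fun _ : Fin (ℓ + 1) => Fin n).sum_comp f, Fintype.sum_prod_type]
  rfl

lemma ofFn_cons (ℓ : ℕ) (i : Fin n) (I : Fin ℓ → Fin n) :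
    List.ofFn (Fin.cons i I : Fin (ℓ + 1) → Fin n) = i :: List.ofFn I := by
  rw [List.ofFn_succ]
  simp

lemma phi_succ (F : List (Fin n) → ℝ) (j : ℕ) :
    ∑ i : Fin n, ∑ J : Fin j → Fin n, F (i :: List.ofFn J) =
      ∑ J : Fin (j + 1) → Fin n, F (List.ofFn J) := by
  rw [sum_pi_succ]
  refine Finset.sum_congr rfl fun i _ => Finset.sum_congr rfl fun J _ => ?_
  rw [ofFn_cons]

/-- `∑_{j < k+1} Φ_F j` -/
noncomputable def PF (F : List (Fin n) → ℝ) (k : ℕ) : ℝ :=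
  ∑ j ∈ Finset.range k, ∑ J : Fin j → Fin n, F (List.ofFn J)

lemma PF_nonneg (F : List (Fin n) → ℝ) (hF : ∀ L, 0 ≤ F L) (k : ℕ) : 0 ≤ PF F k :=
  Finset.sum_nonneg fun j _ => Finset.sum_nonneg fun J _ => hF _

lemma PF_mono (F : List (Fin n) → ℝ) (hF : ∀ L, 0 ≤ F L) {k k' : ℕ} (h : k ≤ k') :
    PF F k ≤ PF F k' :=
  Finset.sum_le_sum_of_subset_of_nonneg (Finset.range_subset_range.2 h)
    fun j _ _ => Finset.sum_nonneg fun J _ => hF _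

lemma sum_cons_le (F : List (Fin n) → ℝ) (hF : ∀ L, 0 ≤ F L) (k : ℕ) :
    ∑ i : Fin n, PF (fun L => F (i :: L)) k ≤ PF F (k + 1) := by
  unfold PF
  rw [Finset.sum_comm]
  calc ∑ j ∈ Finset.range k, ∑ i : Fin n, ∑ J : Fin j → Fin n, F (i :: List.ofFn J)
      = ∑ j ∈ Finset.range k, ∑ J : Fin (j + 1) → Fin n, F (List.ofFn J) :=
        Finset.sum_congr rfl fun j _ => phi_succ F j
    _ ≤ ∑ j ∈ Finset.range (k + 1), ∑ J : Fin j → Fin n, F (List.ofFn J) := by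
        rw [Finset.sum_range_succ' (fun j => ∑ J : Fin j → Fin n, F (List.ofFn J)) k]
        exact le_add_of_nonneg_right (Finset.sum_nonneg fun J _ => hF _)

/-- Counting bound for all splits. -/
lemma countA :
    ∀ (ℓ : ℕ) (F G : List (Fin n) → ℝ), (∀ L, 0 ≤ F L) → (∀ L, 0 ≤ G L) →
      (∑ I : Fin ℓ → Fin n, ((splits (List.ofFn I)).map fun p => F p.1 * G p.2).sum) ≤
        2 ^ ℓ * PF F (ℓ + 1) * PF G (ℓ + 1)
  | 0, F, G, hF, hG => by
    simp [splits, Fintype.sum_unique, List.ofFn_zero, PF]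
  | ℓ + 1, F, G, hF, hG => by
    have key : ∀ i : Fin n, ∀ I : Fin ℓ → Fin n,
        ((splits (List.ofFn (Fin.cons i I : Fin (ℓ + 1) → Fin n))).map
          fun p => F p.1 * G p.2).sum =
        ((splits (List.ofFn I)).map fun p => F (i :: p.1) * G p.2).sum +
          ((splits (List.ofFn I)).map fun p => F p.1 * G (i :: p.2)).sum := by
      intro i I
      rw [ofFn_cons]
      simp [splits, List.map_map, Function.comp_def]
    rw [sum_pi_succ]
    have t1 : ∑ i : Fin n, ∑ I : Fin ℓ → Fin n,
        ((splits (List.ofFn I)).map fun p => F (i :: p.1) * G p.2).sum ≤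
        2 ^ ℓ * PF F (ℓ + 2) * PF G (ℓ + 2) := by
      calc ∑ i : Fin n, ∑ I : Fin ℓ → Fin n,
            ((splits (List.ofFn I)).map fun p => F (i :: p.1) * G p.2).sum
          ≤ ∑ i : Fin n, 2 ^ ℓ * PF (fun L => F (i :: L)) (ℓ + 1) * PF G (ℓ + 1) :=
            Finset.sum_le_sum fun i _ =>
              countA ℓ (fun L => F (i :: L)) G (fun L => hF _) hG
        _ = (∑ i : Fin n, PF (fun L => F (i :: L)) (ℓ + 1)) *
              (2 ^ ℓ * PF G (ℓ + 1)) := by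
            rw [Finset.sum_mul]
            exact Finset.sum_congr rfl fun i _ => by ring
        _ ≤ PF F (ℓ + 2) * (2 ^ ℓ * PF G (ℓ + 2)) := by
            refine mul_le_mul (sum_cons_le F hF (ℓ + 1)) ?_ ?_ (PF_nonneg F hF _)
            · exact mul_le_mul_of_nonneg_left (PF_mono G hG (by omega)) (by positivity)
            · exact mul_nonneg (by positivity) (PF_nonneg G hG _)
        _ = 2 ^ ℓ * PF F (ℓ + 2) * PF G (ℓ + 2) := by ring
    have t2 : ∑ i : Fin n, ∑ I : Fin ℓ → Fin n,
        ((splits (List.ofFn I)).map fun p => F p.1 * G (i :: p.2)).sum ≤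
        2 ^ ℓ * PF F (ℓ + 2) * PF G (ℓ + 2) := by
      calc ∑ i : Fin n, ∑ I : Fin ℓ → Fin n,
            ((splits (List.ofFn I)).map fun p => F p.1 * G (i :: p.2)).sum
          ≤ ∑ i : Fin n, 2 ^ ℓ * PF F (ℓ + 1) * PF (fun L => G (i :: L)) (ℓ + 1) :=
            Finset.sum_le_sum fun i _ =>
              countA ℓ F (fun L => G (i :: L)) hF (fun L => hG _)
        _ = (∑ i : Fin n, PF (fun L => G (i :: L)) (ℓ + 1)) *
              (2 ^ ℓ * PF F (ℓ + 1)) := by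
            rw [Finset.sum_mul]
            exact Finset.sum_congr rfl fun i _ => by ring
        _ ≤ PF G (ℓ + 2) * (2 ^ ℓ * PF F (ℓ + 2)) := by
            refine mul_le_mul (sum_cons_le G hG (ℓ + 1)) ?_ ?_ (PF_nonneg G hG _)
            · exact mul_le_mul_of_nonneg_left (PF_mono F hF (by omega)) (by positivity)
            · exact mul_nonneg (by positivity) (PF_nonneg F hF _)
        _ = 2 ^ ℓ * PF F (ℓ + 2) * PF G (ℓ + 2) := by ring
    calc ∑ i : Fin n, ∑ I : Fin ℓ → Fin n,
          ((splits (List.ofFn (Fin.cons i I : Fin (ℓ + 1) → Fin n))).map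
            fun p => F p.1 * G p.2).sum
        = (∑ i : Fin n, ∑ I : Fin ℓ → Fin n,
            ((splits (List.ofFn I)).map fun p => F (i :: p.1) * G p.2).sum) +
          (∑ i : Fin n, ∑ I : Fin ℓ → Fin n,
            ((splits (List.ofFn I)).map fun p => F p.1 * G (i :: p.2)).sum) := by
          rw [← Finset.sum_add_distrib]
          refine Finset.sum_congr rfl fun i _ => ?_
          rw [← Finset.sum_add_distrib]
          exact Finset.sum_congr rfl fun I _ => key i I
      _ ≤ 2 ^ ℓ * PF F (ℓ + 2) * PF G (ℓ + 2) +
            2 ^ ℓ * PF F (ℓ + 2) * PF G (ℓ + 2) := add_le_add t1 t2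
      _ = 2 ^ (ℓ + 1) * PF F (ℓ + 1 + 1) * PF G (ℓ + 1 + 1) := by
          rw [pow_succ]; ring

/-- Counting bound for splits with nonempty first component. -/
lemma countB :
    ∀ (ℓ : ℕ) (F G : List (Fin n) → ℝ), (∀ L, 0 ≤ F L) → (∀ L, 0 ≤ G L) →
      (∑ I : Fin ℓ → Fin n, ((splits1 (List.ofFn I)).map fun p => F p.1 * G p.2).sum) ≤
        2 ^ ℓ * PF F (ℓ + 1) * PF G ℓ
  | 0, F, G, hF, hG => by
    simp [splits1, Fintype.sum_unique, List.ofFn_zero, PF]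
  | ℓ + 1, F, G, hF, hG => by
    have key : ∀ i : Fin n, ∀ I : Fin ℓ → Fin n,
        ((splits1 (List.ofFn (Fin.cons i I : Fin (ℓ + 1) → Fin n))).map
          fun p => F p.1 * G p.2).sum =
        ((splits (List.ofFn I)).map fun p => F (i :: p.1) * G p.2).sum +
          ((splits1 (List.ofFn I)).map fun p => F p.1 * G (i :: p.2)).sum := by
      intro i I
      rw [ofFn_cons]
      simp [splits1, List.map_map, Function.comp_def]
    rw [sum_pi_succ]
    have t1 : ∑ i : Fin n, ∑ I : Fin ℓ → Fin n,
        ((splits (List.ofFn I)).map fun p => F (i :: p.1) * G p.2).sum ≤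
        2 ^ ℓ * PF F (ℓ + 2) * PF G (ℓ + 1) := by
      calc ∑ i : Fin n, ∑ I : Fin ℓ → Fin n,
            ((splits (List.ofFn I)).map fun p => F (i :: p.1) * G p.2).sum
          ≤ ∑ i : Fin n, 2 ^ ℓ * PF (fun L => F (i :: L)) (ℓ + 1) * PF G (ℓ + 1) :=
            Finset.sum_le_sum fun i _ =>
              countA ℓ (fun L => F (i :: L)) G (fun L => hF _) hG
        _ = (∑ i : Fin n, PF (fun L => F (i :: L)) (ℓ + 1)) *
              (2 ^ ℓ * PF G (ℓ + 1)) := by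
            rw [Finset.sum_mul]
            exact Finset.sum_congr rfl fun i _ => by ring
        _ ≤ PF F (ℓ + 2) * (2 ^ ℓ * PF G (ℓ + 1)) := by
            refine mul_le_mul_of_nonneg_right (sum_cons_le F hF (ℓ + 1)) ?_
            exact mul_nonneg (by positivity) (PF_nonneg G hG _)
        _ = 2 ^ ℓ * PF F (ℓ + 2) * PF G (ℓ + 1) := by ring
    have t2 : ∑ i : Fin n, ∑ I : Fin ℓ → Fin n,
        ((splits1 (List.ofFn I)).map fun p => F p.1 * G (i :: p.2)).sum ≤
        2 ^ ℓ * PF F (ℓ + 2) * PF G (ℓ + 1) := by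
      calc ∑ i : Fin n, ∑ I : Fin ℓ → Fin n,
            ((splits1 (List.ofFn I)).map fun p => F p.1 * G (i :: p.2)).sum
          ≤ ∑ i : Fin n, 2 ^ ℓ * PF F (ℓ + 1) * PF (fun L => G (i :: L)) ℓ :=
            Finset.sum_le_sum fun i _ =>
              countB ℓ F (fun L => G (i :: L)) hF (fun L => hG _)
        _ = (∑ i : Fin n, PF (fun L => G (i :: L)) ℓ) *
              (2 ^ ℓ * PF F (ℓ + 1)) := by
            rw [Finset.sum_mul]
            exact Finset.sum_congr rfl fun i _ => by ring
        _ ≤ PF G (ℓ + 1) * (2 ^ ℓ * PF F (ℓ + 2)) := by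
            refine mul_le_mul (sum_cons_le G hG ℓ) ?_ ?_ (PF_nonneg G hG _)
            · exact mul_le_mul_of_nonneg_left (PF_mono F hF (by omega)) (by positivity)
            · exact mul_nonneg (by positivity) (PF_nonneg F hF _)
        _ = 2 ^ ℓ * PF F (ℓ + 2) * PF G (ℓ + 1) := by ring
    calc ∑ i : Fin n, ∑ I : Fin ℓ → Fin n,
          ((splits1 (List.ofFn (Fin.cons i I : Fin (ℓ + 1) → Fin n))).map
            fun p => F p.1 * G p.2).sum
        = (∑ i : Fin n, ∑ I : Fin ℓ → Fin n,
            ((splits (List.ofFn I)).map fun p => F (i :: p.1) * G p.2).sum) +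
          (∑ i : Fin n, ∑ I : Fin ℓ → Fin n,
            ((splits1 (List.ofFn I)).map fun p => F p.1 * G (i :: p.2)).sum) := by
          rw [← Finset.sum_add_distrib]
          refine Finset.sum_congr rfl fun i _ => ?_
          rw [← Finset.sum_add_distrib]
          exact Finset.sum_congr rfl fun I _ => key i I
      _ ≤ 2 ^ ℓ * PF F (ℓ + 2) * PF G (ℓ + 1) +
            2 ^ ℓ * PF F (ℓ + 2) * PF G (ℓ + 1) := add_le_add t1 t2
      _ = 2 ^ (ℓ + 1) * PF F (ℓ + 1 + 1) * PF G (ℓ + 1) := by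
          rw [pow_succ]; ring

lemma list_sum_pow_le (l : List ℝ) (h : ∀ a ∈ l, 0 ≤ a) (m : ℕ) (hm : 1 ≤ m) :
    l.sum ^ m ≤ (l.length : ℝ) ^ (m - 1) * (l.map (· ^ m)).sum := by
  obtain ⟨k, rfl⟩ : ∃ k, m = k + 1 := ⟨m - 1, by omega⟩
  have hsum : l.sum = ∑ i : Fin l.length, l.get i := by
    conv_lhs => rw [← List.ofFn_get l]
    rw [List.sum_ofFn]
  have hsum2 : (l.map (· ^ (k + 1))).sum = ∑ i : Fin l.length, l.get i ^ (k + 1) := by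
    conv_lhs => rw [← List.ofFn_get l, List.map_ofFn]
    rw [List.sum_ofFn]
    rfl
  rw [hsum, hsum2]
  have := pow_sum_le_card_mul_sum_pow
    (s := (Finset.univ : Finset (Fin l.length))) (f := fun i => l.get i)
    (fun i _ => h _ (l.get_mem _)) k
  simpa [Nat.add_sub_cancel] using this

lemma list_sum_abs_le (l : List ℝ) : |l.sum| ≤ (l.map (|·|)).sum := by
  induction l with
  | nil => simp
  | cons a l ih =>
    simp only [List.sum_cons, List.map_cons]
    exact (abs_add_le _ _).trans (by gcongr)

end Stmt15Aux

theorem stmt_15 {S : Type*} {n : ℕ} (A : Subalgebra ℝ (S → ℝ))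
    (E : Fin n → Derivation ℝ A A) (φ ψ : A) (ℓ m : ℕ) (hℓ : 1 ≤ ℓ) (hm : 1 ≤ m)
    (x : S) :
    ∑ I : Fin ℓ → Fin n,
        |(iterDeriv A E (List.ofFn I) (φ * ψ) - φ * iterDeriv A E (List.ofFn I) ψ :
          S → ℝ) x| ^ m ≤
      (2 : ℝ) ^ (m * ℓ) *
        (∑ j ∈ Finset.range (ℓ + 1), ∑ J : Fin j → Fin n,
          |(iterDeriv A E (List.ofFn J) φ : S → ℝ) x| ^ m) *
        (∑ j ∈ Finset.range ℓ, ∑ J : Fin j → Fin n,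
          |(iterDeriv A E (List.ofFn J) ψ : S → ℝ) x| ^ m) := by
  classical
  -- evaluation ring hom at x
  set Fx : A →+* ℝ := (Pi.evalRingHom (fun _ : S => ℝ) x).comp A.val.toRingHom with hFx
  set F : List (Fin n) → ℝ := fun L => |Fx (iterDeriv A E L φ)| ^ m with hF
  set G : List (Fin n) → ℝ := fun L => |Fx (iterDeriv A E L ψ)| ^ m with hG
  have hFnn : ∀ L, 0 ≤ F L := fun L => by positivity
  have hGnn : ∀ L, 0 ≤ G L := fun L => by positivity
  -- pointwise bound for each I
  have point : ∀ I : Fin ℓ → Fin n,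
      |(iterDeriv A E (List.ofFn I) (φ * ψ) - φ * iterDeriv A E (List.ofFn I) ψ :
        S → ℝ) x| ^ m ≤
      ((2:ℝ) ^ ℓ) ^ (m - 1) *
        ((Stmt15Aux.splits1 (List.ofFn I)).map fun p => F p.1 * G p.2).sum := by
    intro I
    set L := List.ofFn I with hL
    have hcomm : (iterDeriv A E L (φ * ψ) - φ * iterDeriv A E L ψ : S → ℝ) x =
        ((Stmt15Aux.splits1 L).map fun p =>
          Fx (iterDeriv A E p.1 φ) * Fx (iterDeriv A E p.2 ψ)).sum := by
      calc (iterDeriv A E L (φ * ψ) - φ * iterDeriv A E L ψ : S → ℝ) x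
          = Fx (iterDeriv A E L (φ * ψ) - φ * iterDeriv A E L ψ) := rfl
        _ = Fx (((Stmt15Aux.splits1 L).map fun p =>
              iterDeriv A E p.1 φ * iterDeriv A E p.2 ψ).sum) := by
            rw [Stmt15Aux.comm_eq A E φ ψ L]
        _ = _ := by
            rw [map_list_sum, List.map_map]
            congr 1
    rw [hcomm]
    have step1 : |((Stmt15Aux.splits1 L).map fun p =>
        Fx (iterDeriv A E p.1 φ) * Fx (iterDeriv A E p.2 ψ)).sum| ^ m ≤
        (((Stmt15Aux.splits1 L).map fun p =>
          |Fx (iterDeriv A E p.1 φ) * Fx (iterDeriv A E p.2 ψ)|).sum) ^ m := by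
      refine pow_le_pow_left₀ (abs_nonneg _) ?_ m
      have := Stmt15Aux.list_sum_abs_le ((Stmt15Aux.splits1 L).map fun p =>
        Fx (iterDeriv A E p.1 φ) * Fx (iterDeriv A E p.2 ψ))
      rwa [List.map_map] at this
    refine step1.trans ?_
    have step2 := Stmt15Aux.list_sum_pow_le ((Stmt15Aux.splits1 L).map fun p =>
        |Fx (iterDeriv A E p.1 φ) * Fx (iterDeriv A E p.2 ψ)|)
      (by intro a ha; simp only [List.mem_map] at ha; obtain ⟨p, _, rfl⟩ := ha
          exact abs_nonneg _) m hm
    refine step2.trans ?_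
    have hlen : ((((Stmt15Aux.splits1 L).map fun p =>
        |Fx (iterDeriv A E p.1 φ) * Fx (iterDeriv A E p.2 ψ)|).length : ℝ)) ≤
        (2:ℝ) ^ ℓ := by
      rw [List.length_map]
      have h1 := Stmt15Aux.splits1_length_le L
      have h2 : L.length = ℓ := by rw [hL, List.length_ofFn]
      rw [h2] at h1
      calc ((Stmt15Aux.splits1 L).length : ℝ) ≤ ((2 ^ ℓ : ℕ) : ℝ) := by exact_mod_cast h1
        _ = (2:ℝ) ^ ℓ := by push_cast; ring
    have heq : (((Stmt15Aux.splits1 L).map fun p =>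
        |Fx (iterDeriv A E p.1 φ) * Fx (iterDeriv A E p.2 ψ)|).map (· ^ m)).sum =
        ((Stmt15Aux.splits1 L).map fun p => F p.1 * G p.2).sum := by
      rw [List.map_map]
      congr 1
      refine List.map_congr_left fun p _ => ?_
      simp only [Function.comp_def, hF, hG]
      rw [abs_mul, mul_pow]
    rw [heq]
    refine mul_le_mul_of_nonneg_right ?_ ?_
    · exact pow_le_pow_left₀ (by positivity) hlen _
    · refine List.sum_nonneg fun a ha => ?_
      simp only [List.mem_map] at ha
      obtain ⟨p, _, rfl⟩ := ha
      exact mul_nonneg (hFnn _) (hGnn _)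
  have hFeq : ∀ L : List (Fin n), F L = |(iterDeriv A E L φ : S → ℝ) x| ^ m :=
    fun L => rfl
  have hGeq : ∀ L : List (Fin n), G L = |(iterDeriv A E L ψ : S → ℝ) x| ^ m :=
    fun L => rfl
  calc ∑ I : Fin ℓ → Fin n,
        |(iterDeriv A E (List.ofFn I) (φ * ψ) - φ * iterDeriv A E (List.ofFn I) ψ :
          S → ℝ) x| ^ m
      ≤ ∑ I : Fin ℓ → Fin n, ((2:ℝ) ^ ℓ) ^ (m - 1) *
          ((Stmt15Aux.splits1 (List.ofFn I)).map fun p => F p.1 * G p.2).sum :=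
        Finset.sum_le_sum fun I _ => point I
    _ = ((2:ℝ) ^ ℓ) ^ (m - 1) * ∑ I : Fin ℓ → Fin n,
          ((Stmt15Aux.splits1 (List.ofFn I)).map fun p => F p.1 * G p.2).sum := by
        rw [Finset.mul_sum]
    _ ≤ ((2:ℝ) ^ ℓ) ^ (m - 1) * (2 ^ ℓ * Stmt15Aux.PF F (ℓ + 1) * Stmt15Aux.PF G ℓ) := by
        refine mul_le_mul_of_nonneg_left ?_ (by positivity)
        exact Stmt15Aux.countB ℓ F G hFnn hGnn
    _ = (2 : ℝ) ^ (m * ℓ) * Stmt15Aux.PF F (ℓ + 1) * Stmt15Aux.PF G ℓ := by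
        have h2 : ((2:ℝ) ^ ℓ) ^ (m - 1) * 2 ^ ℓ = 2 ^ (m * ℓ) := by
          rw [← pow_mul, ← pow_add]
          congr 1
          cases m with
          | zero => omega
          | succ k => simp [Nat.succ_sub_one]; ring
        rw [← h2]; ring
    _ = (2 : ℝ) ^ (m * ℓ) *
          (∑ j ∈ Finset.range (ℓ + 1), ∑ J : Fin j → Fin n,
            |(iterDeriv A E (List.ofFn J) φ : S → ℝ) x| ^ m) *
          (∑ j ∈ Finset.range ℓ, ∑ J : Fin j → Fin n,
            |(iterDeriv A E (List.ofFn J) ψ : S → ℝ) x| ^ m) := by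
        unfold Stmt15Aux.PF
        simp only [hFeq, hGeq]
end
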